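/- Let 1 ≤ d < n and let Δ be a strong f-simplicial complex on [n] that is pure (d−1)-dimensional with facet set a nonempty proper subset of [n]_d. Then the Alexander dual of Δ equals the homogeneous complement of its Newton complement dual: Δ^∨ = (Δ^c)'. -/

import Mathlib

/-
The strong hypothesis determines `Δ` from its `d`-sets. Since `Δ` is an `f`-complex, the
nonface complex has all sets of size `< d`, hence so does `Δ`; since `Δ'` is an `f`-complex
with no faces of size `> d`, every set of size `> d` contains a facet of `Δ'`, i.e. a `d`-set
that is not a facet of `Δ`. So `T ∉ Δ` exactly when `T` contains a `d`-set that is not a facet.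
Now `S ∈ Δ^∨` iff `Sᶜ ∉ Δ`, while complementation matches the `(n - d)`-sets that are not
facets of `Δ^c` with the `d`-sets that are not facets of `Δ`, so `S ∈ (Δ^c)'` iff `Sᶜ`
contains a `d`-set that is not a facet of `Δ`.
-/

open Finset

/-- A simplicial complex on `Fin n`, given as the finset of its faces. -/
def IsComplex {n : ℕ} (Δ : Finset (Finset (Fin n))) : Prop :=
  Δ.Nonempty ∧ ∀ A ∈ Δ, ∀ B ⊆ A, B ∈ Δ

def facets {n : ℕ} (Δ : Finset (Finset (Fin n))) : Finset (Finset (Fin n)) :=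
  Δ.filter fun F => ∀ G ∈ Δ, F ⊆ G → F = G

def generated {n : ℕ} (𝔉 : Finset (Finset (Fin n))) : Finset (Finset (Fin n)) :=
  univ.filter fun A => ∃ F ∈ 𝔉, A ⊆ F

/-- The Newton complement dual `Δ^c`. -/
def cdual {n : ℕ} (Δ : Finset (Finset (Fin n))) : Finset (Finset (Fin n)) :=
  generated ((facets Δ).image fun F => Fᶜ)

def nonfaceComplex {n : ℕ} (Δ : Finset (Finset (Fin n))) : Finset (Finset (Fin n)) :=
  univ.filter fun A => ∀ F ∈ facets Δ, ¬ F ⊆ A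

def IsFComplex {n : ℕ} (Δ : Finset (Finset (Fin n))) : Prop :=
  ∀ k : ℕ, (Δ.filter fun A => A.card = k).card =
    ((nonfaceComplex Δ).filter fun A => A.card = k).card

/-- `Δ` is pure `(d-1)`-dimensional. -/
def PureDim {n : ℕ} (d : ℕ) (Δ : Finset (Finset (Fin n))) : Prop :=
  ∀ F ∈ facets Δ, F.card = d

def minNonfaces {n : ℕ} (Δ : Finset (Finset (Fin n))) : Finset (Finset (Fin n)) :=
  univ.filter fun A => A ∉ Δ ∧ ∀ B ⊂ A, B ∈ Δ

/-- The Alexander dual `Δ^∨`. -/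
def adual {n : ℕ} (Δ : Finset (Finset (Fin n))) : Finset (Finset (Fin n)) :=
  generated ((minNonfaces Δ).image fun F => Fᶜ)

/-- The homogeneous complement `Δ'`, in degree `e`. -/
def hcompl {n : ℕ} (e : ℕ) (Δ : Finset (Finset (Fin n))) : Finset (Finset (Fin n)) :=
  generated (univ.filter fun A : Finset (Fin n) => A.card = e ∧ A ∉ facets Δ)

section

variable {n : ℕ}

@[simp]
lemma mem_generated {𝔉 : Finset (Finset (Fin n))} {A : Finset (Fin n)} :
    A ∈ generated 𝔉 ↔ ∃ F ∈ 𝔉, A ⊆ F := by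
  simp [generated]

lemma mem_facets {Δ : Finset (Finset (Fin n))} {F : Finset (Fin n)} :
    F ∈ facets Δ ↔ F ∈ Δ ∧ ∀ G ∈ Δ, F ⊆ G → F = G :=
  mem_filter

lemma exists_mem_facets_superset {Δ : Finset (Finset (Fin n))} {A : Finset (Fin n)}
    (hA : A ∈ Δ) : ∃ F ∈ facets Δ, A ⊆ F := by
  obtain ⟨F, hAF, hF⟩ := (Δ.filter (A ⊆ ·)).exists_le_maximal (mem_filter.mpr ⟨hA, le_rfl⟩)
  refine ⟨F, mem_facets.mpr ⟨(mem_filter.mp hF.prop).1, fun G hG hFG => ?_⟩, hAF⟩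
  exact le_antisymm hFG (hF.2 (mem_filter.mpr ⟨hG, hAF.trans hFG⟩) hFG)

lemma mem_facets_of_card_eq {d : ℕ} {Δ : Finset (Finset (Fin n))} (hpure : PureDim d Δ)
    {A : Finset (Fin n)} (hA : A ∈ Δ) (hcard : A.card = d) : A ∈ facets Δ := by
  obtain ⟨F, hF, hAF⟩ := exists_mem_facets_superset hA
  rwa [eq_of_subset_of_card_le hAF (by rw [hpure F hF, hcard])]

lemma facets_generated_subset {𝔉 : Finset (Finset (Fin n))} : facets (generated 𝔉) ⊆ 𝔉 := by
  intro G hG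
  obtain ⟨hG, hmax⟩ := mem_facets.mp hG
  obtain ⟨F, hF, hGF⟩ := mem_generated.mp hG
  rwa [hmax F (mem_generated.mpr ⟨F, hF, subset_rfl⟩) hGF]

lemma facets_generated_of_card_eq {𝔉 : Finset (Finset (Fin n))} {e : ℕ}
    (hcard : ∀ F ∈ 𝔉, F.card = e) : facets (generated 𝔉) = 𝔉 := by
  refine Subset.antisymm facets_generated_subset fun F hF => ?_
  refine mem_facets.mpr ⟨mem_generated.mpr ⟨F, hF, subset_rfl⟩, fun G hG hFG => ?_⟩
  obtain ⟨F', hF', hGF'⟩ := mem_generated.mp hG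
  have hFF' : F = F' := eq_of_subset_of_card_le (hFG.trans hGF') (by rw [hcard F hF, hcard F' hF'])
  exact Subset.antisymm hFG (hFF' ▸ hGF')

lemma exists_minNonfaces_subset {Δ : Finset (Finset (Fin n))} {T : Finset (Fin n)}
    (hT : T ∉ Δ) : ∃ M ∈ minNonfaces Δ, M ⊆ T := by
  induction T using strongInduction with
  | _ T ih =>
    by_cases h : ∀ B ⊂ T, B ∈ Δ
    · exact ⟨T, mem_filter.mpr ⟨mem_univ _, hT, h⟩, subset_rfl⟩
    · push Not at h
      obtain ⟨B, hBT, hB⟩ := h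
      obtain ⟨M, hM, hMB⟩ := ih B hBT hB
      exact ⟨M, hM, hMB.trans hBT.subset⟩

lemma mem_adual_iff {Δ : Finset (Finset (Fin n))} (hΔ : ∀ A ∈ Δ, ∀ B ⊆ A, B ∈ Δ)
    {S : Finset (Fin n)} : S ∈ adual Δ ↔ Sᶜ ∉ Δ := by
  simp only [adual, mem_generated, mem_image, exists_exists_and_eq_and]
  constructor
  · rintro ⟨M, hM, hSM⟩ hSc
    exact (mem_filter.mp hM).2.1 (hΔ Sᶜ hSc M (subset_compl_comm.mp hSM))
  · intro hSc
    obtain ⟨M, hM, hMS⟩ := exists_minNonfaces_subset hSc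
    exact ⟨M, hM, subset_compl_comm.mp hMS⟩

lemma mem_of_card_lt_of_isFComplex {d : ℕ} {Δ : Finset (Finset (Fin n))}
    (hf : IsFComplex Δ) (hpure : PureDim d Δ) {A : Finset (Fin n)} (hA : A.card < d) :
    A ∈ Δ := by
  have hnonface : (nonfaceComplex Δ).filter (·.card = A.card) = univ.filter (·.card = A.card) := by
    ext B
    simp only [nonfaceComplex, mem_filter, mem_univ, true_and, and_iff_right_iff_imp]
    rintro hB F hF hFB
    have := card_le_card hFB
    rw [hpure F hF] at this
    omega
  have hall : Δ.filter (·.card = A.card) = univ.filter (·.card = A.card) :=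
    eq_of_subset_of_card_le (filter_subset_filter _ (subset_univ Δ))
      ((hf A.card).trans (congrArg card hnonface)).ge
  have hA' : A ∈ Δ.filter (·.card = A.card) := hall ▸ mem_filter.mpr ⟨mem_univ A, rfl⟩
  exact (mem_filter.mp hA').1

lemma exists_mem_subset_of_isFComplex_generated {𝔉 : Finset (Finset (Fin n))}
    (hf : IsFComplex (generated 𝔉)) {T : Finset (Fin n)} (hT : ∀ F ∈ 𝔉, F.card < T.card) :
    ∃ F ∈ 𝔉, F ⊆ T := by
  have hnoFace : (generated 𝔉).filter (·.card = T.card) = ∅ := by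
    refine filter_eq_empty_iff.mpr fun B hB hBT => ?_
    obtain ⟨F, hF, hBF⟩ := mem_generated.mp hB
    exact (card_le_card hBF).not_gt (hBT ▸ hT F hF)
  have hT' : T ∉ nonfaceComplex (generated 𝔉) := by
    have := hf T.card
    rw [hnoFace, card_empty, eq_comm, card_eq_zero, filter_eq_empty_iff] at this
    exact fun hmem => this hmem rfl
  simp only [nonfaceComplex, mem_filter, mem_univ, true_and, not_forall, not_not] at hT'
  obtain ⟨G, hG, hGT⟩ := hT'
  exact ⟨G, facets_generated_subset hG, hGT⟩

lemma notMem_iff_exists_subset_card_eq_notMem_facets {d : ℕ} {Δ : Finset (Finset (Fin n))}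
    (hΔ : ∀ A ∈ Δ, ∀ B ⊆ A, B ∈ Δ) (hpure : PureDim d Δ)
    (hstrong : IsFComplex Δ ∧ IsFComplex (hcompl d Δ)) {T : Finset (Fin n)} :
    T ∉ Δ ↔ ∃ A ⊆ T, A.card = d ∧ A ∉ facets Δ := by
  constructor
  · intro hT
    rcases lt_trichotomy T.card d with h | h | h
    · exact absurd (mem_of_card_lt_of_isFComplex hstrong.1 hpure h) hT
    · exact ⟨T, subset_rfl, h, fun hF => hT (mem_facets.mp hF).1⟩
    · obtain ⟨A, hA, hAT⟩ := exists_mem_subset_of_isFComplex_generated hstrong.2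
        fun F hF => (mem_filter.mp hF).2.1 ▸ h
      obtain ⟨-, hAcard, hAfac⟩ := mem_filter.mp hA
      exact ⟨A, hAT, hAcard, hAfac⟩
  · rintro ⟨A, hAT, hAcard, hAfac⟩ hT
    exact hAfac (mem_facets_of_card_eq hpure (hΔ T hT A hAT) hAcard)

lemma mem_hcompl_cdual_iff {d : ℕ} {Δ : Finset (Finset (Fin n))} (hpure : PureDim d Δ)
    (hdn : d ≤ n) {S : Finset (Fin n)} :
    S ∈ hcompl (n - d) (cdual Δ) ↔ ∃ A ⊆ Sᶜ, A.card = d ∧ A ∉ facets Δ := by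
  have hfacets : facets (cdual Δ) = (facets Δ).image (·ᶜ) := by
    refine facets_generated_of_card_eq (e := n - d) fun B hB => ?_
    obtain ⟨F, hF, rfl⟩ := mem_image.mp hB
    rw [card_compl, Fintype.card_fin, hpure F hF]
  simp only [hcompl, mem_generated, mem_filter, mem_univ, true_and, hfacets]
  rw [compl_surjective.exists]
  refine exists_congr fun A => ?_
  have hA : A.card ≤ n := card_le_univ A |>.trans_eq (Fintype.card_fin n)
  rw [card_compl, Fintype.card_fin, compl_injective.mem_finset_image, subset_compl_comm]
  constructor
  · rintro ⟨⟨hcard, hfac⟩, hAS⟩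
    exact ⟨hAS, by omega, hfac⟩
  · rintro ⟨hAS, hcard, hfac⟩
    exact ⟨⟨by omega, hfac⟩, hAS⟩

end

theorem stmt8_general {n d : ℕ} (hdn : d < n)
    (Δ : Finset (Finset (Fin n))) (hΔ : IsComplex Δ) (hpure : PureDim d Δ)
    (hstrong : IsFComplex Δ ∧ IsFComplex (hcompl d Δ)) :
    adual Δ = hcompl (n - d) (cdual Δ) := by
  ext S
  rw [mem_adual_iff hΔ.2, mem_hcompl_cdual_iff hpure hdn.le,
    notMem_iff_exists_subset_card_eq_notMem_facets hΔ.2 hpure hstrong]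

/-- for a strong `f`-simplicial complex `Δ` on `[n]`, pure `(d-1)`-dimensional,
with facet set a nonempty proper subfamily of the `d`-element subsets, the Alexander dual
`Δ^∨` equals the homogeneous complement (in degree `n - d`) of the Newton complement
dual `Δ^c`. -/
theorem stmt8 {n d : ℕ} (hd : 1 ≤ d) (hdn : d < n)
    (Δ : Finset (Finset (Fin n))) (hΔ : IsComplex Δ) (hpure : PureDim d Δ)
    (hne : (facets Δ).Nonempty)
    (hproper : ∃ A : Finset (Fin n), A.card = d ∧ A ∉ facets Δ)
    (hstrong : IsFComplex Δ ∧ IsFComplex (hcompl d Δ)) :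
    adual Δ = hcompl (n - d) (cdual Δ) :=
  stmt8_general hdn Δ hΔ hpure hstrong
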